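/- arXiv:1310.2437 — 2 statements merged into one kernel-verified Lean document; each statement's English description precedes it below -/
import Mathlib

section
/- The closure in X^# (with respect to the Stone–Čech topology, where basic open sets are {p : A ∈ p} for A ⊆ X) of an invariant subset S of X^# is invariant. -/
open Metric Bornology Set

variable {X : Type*} [MetricSpace X]

/-- `B(A,r) = ⋃_{a∈A} B(a,r)` where `B(a,r)` is the closed ball of radius `r`. -/
def ballU (A : Set X) (r : ℝ) : Set X := ⋃ a ∈ A, Metric.closedBall a r

/-- `X^#`: the set of ultrafilters on `X` all of whose members are unbounded. -/
def sharp (X : Type*) [MetricSpace X] : Set (Ultrafilter X) :=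
  {p | ∀ P ∈ p, ¬ Bornology.IsBounded P}

/-- Parallelity: `p ∥ q` iff there is `r ≥ 0` with `B(Q,r) ∈ p` for every `Q ∈ q`. -/
def Par (p q : Ultrafilter X) : Prop :=
  ∃ r : ℝ, 0 ≤ r ∧ ∀ Q ∈ q, ballU Q r ∈ p

/-- `p̆ = {q ∈ X^# : q ∥ p}`. -/
def pbreve (p : Ultrafilter X) : Set (Ultrafilter X) :=
  {q | q ∈ sharp X ∧ Par q p}

/-- The `p`-companion `Δ_p(Y) = {q ∈ X^# : Y ∈ q, q ∥ p}`. -/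
def Delta (p : Ultrafilter X) (Y : Set X) : Set (Ultrafilter X) :=
  {q | q ∈ sharp X ∧ Y ∈ q ∧ Par q p}

/-- A set `S ⊆ X^#` is invariant if `p ∈ S`, `q ∈ X^#`, `q ∥ p` imply `q ∈ S`. -/
def Invt (S : Set (Ultrafilter X)) : Prop :=
  ∀ p ∈ S, ∀ q, q ∈ sharp X → Par q p → q ∈ S

/-- `Y` is large if `X = B(Y,r)` for some `r ≥ 0`. -/
def Large (Y : Set X) : Prop := ∃ r : ℝ, 0 ≤ r ∧ ballU Y r = Set.univ

/-- `Y` is thick if for every `r ≥ 0` there is `y ∈ Y` with `B(y,r) ⊆ Y`. -/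
def Thick (Y : Set X) : Prop := ∀ r : ℝ, 0 ≤ r → ∃ y ∈ Y, Metric.closedBall y r ⊆ Y

/-- `Y` is prethick if `B(Y,r)` is thick for some `r ≥ 0`. -/
def Prethick (Y : Set X) : Prop := ∃ r : ℝ, 0 ≤ r ∧ Thick (ballU Y r)

/-- `Y` is small if `(X∖Y) ∩ L` is large for every large `L`. -/
def SmallSet (Y : Set X) : Prop := ∀ L : Set X, Large L → Large (Yᶜ ∩ L)

/-- `Y` is thin if for each `r ≥ 0` there is a bounded `V` with
`B(y,r) ∩ Y = {y}` for all `y ∈ Y∖V`. -/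
def Thin (Y : Set X) : Prop :=
  ∀ r : ℝ, 0 ≤ r → ∃ V : Set X, Bornology.IsBounded V ∧
    ∀ y ∈ Y \ V, Metric.closedBall y r ∩ Y = {y}

/-- `Y` is `n`-thin if for each `r ≥ 0` there is a bounded `V` with
`|B(y,r) ∩ Y| ≤ n` for all `y ∈ Y∖V`. -/
def NThin (n : ℕ) (Y : Set X) : Prop :=
  ∀ r : ℝ, 0 ≤ r → ∃ V : Set X, Bornology.IsBounded V ∧
    ∀ y ∈ Y \ V, (Metric.closedBall y r ∩ Y).encard ≤ n

/-- `M` is a minimal nonempty closed invariant subset of `X^#`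
(closures/closedness taken in the Stone topology on ultrafilters). -/
def MinCI (M : Set (Ultrafilter X)) : Prop :=
  M ⊆ sharp X ∧ M.Nonempty ∧ IsClosed M ∧ Invt M ∧
    ∀ S ⊆ M, S.Nonempty → IsClosed S → Invt S → S = M

/-!
Let `p ∈ cl S` and `q ∥ p`. Every `Q ∈ q` has a thickening `B(Q, r)` in `p`, hence in some
`s ∈ S`. Moving each point of `B(Q, r)` to a point of `Q` at distance `≤ r` pushes `s` forward
to an ultrafilter `t ∥ s` with `Q ∈ t`; by invariance `t ∈ S`, so every basic neighbourhood of
`q` meets `S`.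
-/

theorem Ultrafilter.mem_closure_iff_forall_exists_mem {α : Type*} {S : Set (Ultrafilter α)}
    {p : Ultrafilter α} : p ∈ closure S ↔ ∀ A ∈ p, ∃ s ∈ S, A ∈ s := by
  simp [ultrafilterBasis_is_basis.mem_closure_iff, ultrafilterBasis, Set.Nonempty, and_comm]

theorem mem_ballU {A : Set X} {r : ℝ} {x : X} : x ∈ ballU A r ↔ ∃ a ∈ A, dist x a ≤ r := by
  simp [ballU]

theorem Par.symm {p q : Ultrafilter X} (h : Par p q) : Par q p := by
  obtain ⟨r, hr, h⟩ := h
  refine ⟨r, hr, fun A hA => ?_⟩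
  by_contra hA'
  rw [← Ultrafilter.compl_mem_iff_notMem] at hA'
  obtain ⟨x, hxA, hx⟩ := Filter.nonempty_of_mem (Filter.inter_mem hA (h _ hA'))
  obtain ⟨y, hy, hxy⟩ := mem_ballU.1 hx
  exact hy (mem_ballU.2 ⟨x, hxA, by rwa [dist_comm]⟩)

section Displacement

variable {s : Ultrafilter X} {f : X → X} {r : ℝ}

theorem Ultrafilter.map_mem_sharp (hs : s ∈ sharp X) (hf : {x | dist x (f x) ≤ r} ∈ s) :
    s.map f ∈ sharp X := by
  intro T hT hTb
  refine hs _ (Filter.inter_mem (Ultrafilter.mem_map.1 hT) hf) ?_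
  refine (hTb.cthickening (δ := r)).subset fun x ⟨hxT, hx⟩ => ?_
  exact mem_cthickening_of_dist_le x (f x) r T hxT hx

theorem Ultrafilter.par_map (hr : 0 ≤ r) (hf : {x | dist x (f x) ≤ r} ∈ s) : Par (s.map f) s := by
  refine ⟨r, hr, fun P hP => Ultrafilter.mem_map.2 ?_⟩
  refine Filter.mem_of_superset (Filter.inter_mem hP hf) fun x ⟨hxP, hx⟩ => ?_
  exact mem_ballU.2 ⟨x, hxP, by rwa [dist_comm]⟩

end Displacement

theorem exists_par_mem_of_ballU_mem {s : Ultrafilter X} (hs : s ∈ sharp X) {Q : Set X} {r : ℝ}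
    (hr : 0 ≤ r) (hQ : ballU Q r ∈ s) : ∃ t ∈ sharp X, Q ∈ t ∧ Par t s := by
  have hproj : ∀ x ∈ ballU Q r, ∃ y ∈ Q, dist x y ≤ r := fun _ => mem_ballU.1
  choose! f hfQ hfr using hproj
  have hdisp : {x | dist x (f x) ≤ r} ∈ s := Filter.mem_of_superset hQ hfr
  exact ⟨s.map f, s.map_mem_sharp hs hdisp,
    Ultrafilter.mem_map.2 (Filter.mem_of_superset hQ hfQ), s.par_map hr hdisp⟩

theorem stmt2_general (S : Set (Ultrafilter X)) (hS : S ⊆ sharp X) (hinv : Invt S) :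
    Invt (closure S ∩ sharp X) := by
  rintro p ⟨hpS, -⟩ q hq hqp
  refine ⟨?_, hq⟩
  obtain ⟨r, hr, hpq⟩ := hqp.symm
  rw [Ultrafilter.mem_closure_iff_forall_exists_mem] at hpS ⊢
  intro Q hQ
  obtain ⟨s, hsS, hs⟩ := hpS _ (hpq Q hQ)
  obtain ⟨t, ht, hQt, hts⟩ := exists_par_mem_of_ballU_mem (hS hsS) hr hs
  exact ⟨t, hinv s hsS t ht hts, hQt⟩

theorem stmt2 (hX : ¬ Bornology.IsBounded (Set.univ : Set X))
    (S : Set (Ultrafilter X)) (hS : S ⊆ sharp X) (hinv : Invt S) :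
    Invt (closure S ∩ sharp X) :=
  stmt2_general S hS hinv
end

section
/- A closed subset M of X^# is a minimal nonempty closed invariant subset if and only if M ≠ ∅ and M equals the closure of p̆ = {q ∈ X^# : q ∥ p} for every p ∈ M. -/
open Metric Bornology Set

variable {X : Type*} [MetricSpace X]

/-!
Parallelity is reflexive and transitive, so `p̆` is invariant, and the closure of an invariant
subset `S` of `X^#` is again invariant: if `q' ∥ q` with constant `r`, `q ∈ closure S` and
`A ∈ q'`, then some `s ∈ S` contains `B(A,r)`, and pushing `s` forward along a map that moves
points by at most `r` and retracts `B(A,r)` into `A` yields a member of `S` parallel to `s` that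
contains `A`. Hence `closure p̆ ∩ X^#` is the smallest closed invariant subset of `X^#` containing
`p`, and minimality of `M` says exactly that this set is `M` for every `p ∈ M`.
-/

theorem Ultrafilter.mem_closure_iff {α : Type*} {S : Set (Ultrafilter α)} {q : Ultrafilter α} :
    q ∈ closure S ↔ ∀ A ∈ q, ∃ s ∈ S, A ∈ s := by
  rw [ultrafilterBasis_is_basis.mem_closure_iff]
  constructor
  · intro h A hA
    obtain ⟨s, hAs, hs⟩ := h _ ⟨A, rfl⟩ hA
    exact ⟨s, hs, hAs⟩
  · rintro h _ ⟨A, rfl⟩ hA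
    obtain ⟨s, hs, hAs⟩ := h A hA
    exact ⟨s, hAs, hs⟩

theorem subset_ballU {A : Set X} {r : ℝ} (hr : 0 ≤ r) : A ⊆ ballU A r :=
  fun x hx => mem_ballU.2 ⟨x, hx, by simpa using hr⟩

theorem ballU_ballU_subset {A : Set X} {r s : ℝ} : ballU (ballU A s) r ⊆ ballU A (r + s) := by
  intro x hx
  obtain ⟨a, ha, hxa⟩ := mem_ballU.1 hx
  obtain ⟨b, hb, hab⟩ := mem_ballU.1 ha
  exact mem_ballU.2 ⟨b, hb, (dist_triangle x a b).trans (add_le_add hxa hab)⟩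

theorem ballU_subset_cthickening {A : Set X} {r : ℝ} : ballU A r ⊆ cthickening r A :=
  iUnion₂_subset fun _ ha => closedBall_subset_cthickening ha r

theorem Bornology.IsBounded.ballU {A : Set X} (hA : IsBounded A) (r : ℝ) :
    IsBounded (ballU A r) :=
  hA.cthickening.subset ballU_subset_cthickening

theorem ballU_mem_of_forall_ballU_mem {p q : Ultrafilter X} {r : ℝ}
    (h : ∀ Q ∈ q, ballU Q r ∈ p) {P : Set X} (hP : P ∈ p) : ballU P r ∈ q := by
  by_contra hPq
  have hfar : ballU (ballU P r)ᶜ r ∈ p := h _ (Ultrafilter.compl_mem_iff_notMem.2 hPq)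
  have hdisj : Disjoint (ballU (ballU P r)ᶜ r) P := by
    refine Set.disjoint_left.2 fun x hx hxP => ?_
    obtain ⟨c, hc, hxc⟩ := mem_ballU.1 hx
    exact hc (mem_ballU.2 ⟨x, hxP, by rwa [dist_comm]⟩)
  exact (Ultrafilter.nonempty_of_mem (Filter.inter_mem hfar hP)).ne_empty hdisj.inter_eq

theorem Par.refl (p : Ultrafilter X) : Par p p :=
  ⟨0, le_rfl, fun _ hQ => Filter.mem_of_superset hQ (subset_ballU le_rfl)⟩

theorem Par.trans {p q s : Ultrafilter X} (hpq : Par p q) (hqs : Par q s) : Par p s := by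
  obtain ⟨r, hr, hpq⟩ := hpq
  obtain ⟨r', hr', hqs⟩ := hqs
  exact ⟨r + r', add_nonneg hr hr', fun Q hQ =>
    Filter.mem_of_superset (hpq _ (hqs _ hQ)) ballU_ballU_subset⟩

theorem Par.mem_sharp {p q : Ultrafilter X} (hqp : Par q p) (hp : p ∈ sharp X) : q ∈ sharp X := by
  obtain ⟨r, -, hqp⟩ := hqp
  exact fun P hP hPb => hp _ (ballU_mem_of_forall_ballU_mem hqp hP) (hPb.ballU r)

theorem par_map_of_dist_le {f : X → X} {r : ℝ} (hr : 0 ≤ r) (hf : ∀ x, dist (f x) x ≤ r)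
    (s : Ultrafilter X) : Par (s.map f) s :=
  ⟨r, hr, fun _ hQ => Ultrafilter.mem_map.2 <|
    Filter.mem_of_superset hQ fun x hx => mem_ballU.2 ⟨x, hx, hf x⟩⟩

theorem exists_mapsTo_ballU_dist_le (A : Set X) {r : ℝ} (hr : 0 ≤ r) :
    ∃ f : X → X, (∀ x, dist (f x) x ≤ r) ∧ MapsTo f (ballU A r) A := by
  classical
  refine ⟨fun x => if hx : x ∈ ballU A r then (mem_ballU.1 hx).choose else x,
    fun x => ?_, fun x hx => ?_⟩
  · dsimp only
    split_ifs with hx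
    · exact dist_comm x _ ▸ (mem_ballU.1 hx).choose_spec.2
    · simpa using hr
  · simp only [dif_pos hx]
    exact (mem_ballU.1 hx).choose_spec.1

theorem isClosed_sharp : IsClosed (sharp X) := by
  simp only [sharp, ofPred_forall]
  exact isClosed_iInter fun P => isClosed_imp (ultrafilter_isOpen_basic P) isClosed_const

theorem invt_sharp : Invt (sharp X) :=
  fun _ _ _ hq _ => hq

theorem Invt.inter {S T : Set (Ultrafilter X)} (hS : Invt S) (hT : Invt T) : Invt (S ∩ T) :=
  fun p hp q hq hqp => ⟨hS p hp.1 q hq hqp, hT p hp.2 q hq hqp⟩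

theorem Invt.closure {S : Set (Ultrafilter X)} (hS : S ⊆ sharp X) (hI : Invt S) :
    Invt (closure S) := by
  rintro q hq q' - ⟨r, hr, hq'q⟩
  rw [Ultrafilter.mem_closure_iff] at hq ⊢
  intro A hA
  obtain ⟨s, hs, hAs⟩ := hq _ (ballU_mem_of_forall_ballU_mem hq'q hA)
  obtain ⟨f, hf, hfA⟩ := exists_mapsTo_ballU_dist_le A hr
  have hpar := par_map_of_dist_le hr hf s
  exact ⟨s.map f, hI s hs _ (hpar.mem_sharp (hS hs)) hpar,
    Ultrafilter.mem_map.2 (Filter.mem_of_superset hAs fun _ hx => hfA hx)⟩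

theorem invt_pbreve (p : Ultrafilter X) : Invt (pbreve p) :=
  fun _ hq _ hq' hq'q => ⟨hq', hq'q.trans hq.2⟩

theorem mem_pbreve_self {p : Ultrafilter X} (hp : p ∈ sharp X) : p ∈ pbreve p :=
  ⟨hp, Par.refl p⟩

theorem closure_pbreve_subset {S : Set (Ultrafilter X)} (hS : IsClosed S) (hI : Invt S)
    {p : Ultrafilter X} (hp : p ∈ S) : closure (pbreve p) ⊆ S :=
  closure_minimal (fun q hq => hI p hp q hq.1 hq.2) hS

theorem stmt4_general (M : Set (Ultrafilter X)) (hM : M ⊆ sharp X) (hcl : IsClosed M) :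
    MinCI M ↔ M.Nonempty ∧ ∀ p ∈ M, M = closure (pbreve p) ∩ sharp X := by
  constructor
  · rintro ⟨-, hne, -, hinv, hmin⟩
    refine ⟨hne, fun p hp => (hmin _ ?_ ?_ ?_ ?_).symm⟩
    · exact inter_subset_left.trans (closure_pbreve_subset hcl hinv hp)
    · exact ⟨p, subset_closure (mem_pbreve_self (hM hp)), hM hp⟩
    · exact isClosed_closure.inter isClosed_sharp
    · exact ((invt_pbreve p).closure fun _ hq => hq.1).inter invt_sharp
  · rintro ⟨hne, hM_eq⟩
    refine ⟨hM, hne, hcl, fun p hp q hq hqp => ?_, fun S hSM ⟨s, hs⟩ hScl hSinv => ?_⟩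
    · rw [hM_eq p hp]
      exact ⟨subset_closure ⟨hq, hqp⟩, hq⟩
    · refine hSM.antisymm ?_
      rw [hM_eq s (hSM hs)]
      exact inter_subset_left.trans (closure_pbreve_subset hScl hSinv hs)

theorem stmt4 (hX : ¬ Bornology.IsBounded (Set.univ : Set X))
    (M : Set (Ultrafilter X)) (hM : M ⊆ sharp X) (hcl : IsClosed M) :
    MinCI M ↔ M.Nonempty ∧ ∀ p ∈ M, M = closure (pbreve p) ∩ sharp X :=
  stmt4_general M hM hcl
end
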